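/- Fix s > 1 and ξ ∈ ℝ \ {0}. Define for h > 0 the rescaled physical eigenvalue Λ_ph,h(ξ) := h⁻² Λ_ph(ξ h), where Λ_ph(η) is the smaller eigenvalue of M(η)⁻¹ R^s(η). Then Λ_ph,h(ξ) → ξ² as h → 0. -/

import Mathlib

/-!
Since `det M(η) = 1/12`, a number `Λ` is an eigenvalue of `M(η)⁻¹ R^s(η)` exactly when
`det (R^s(η) - Λ M(η)) = Λ²/12 - B Λ + C` vanishes. The two roots add up to `12 B`, so the
smallest real eigenvalue is `6 B - √(36 B² - 12 C)`, a continuous function of `η` vanishing at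
`η = 0`. Writing `C(η) = η² sinc²(η/2) (s - cos²(η/2))`, the relation `Λ (12 B - Λ) = 12 C` at
`η = ξ h`, divided by `h²`, reads
`(Λ_h / h²) (12 B(ξ h) - Λ_h) = 12 ξ² sinc²(ξ h/2) (s - cos²(ξ h/2))`;
as `h → 0` the second factor on the left tends to `12 (s - 1) ≠ 0` and the right side to
`12 ξ² (s - 1)`.
-/

open Real Complex Matrix Filter Topology

/-- Fourier symbol of the SIPG mass matrix (mesh size h = 1). -/
noncomputable def Msym (ξ : ℝ) : Matrix (Fin 2) (Fin 2) ℂ :=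
  !![(((2 + Real.cos ξ) / 3 : ℝ) : ℂ), Complex.I * (Real.sin ξ : ℂ) / 6;
     -Complex.I * (Real.sin ξ : ℂ) / 6, (((2 - Real.cos ξ) / 12 : ℝ) : ℂ)]

/-- Fourier symbol of the SIPG stiffness matrix with penalty parameter s (mesh size h = 1). -/
noncomputable def Rsym (s ξ : ℝ) : Matrix (Fin 2) (Fin 2) ℂ :=
  !![((4 * Real.sin (ξ / 2) ^ 2 : ℝ) : ℂ), 0;
     0, ((s - Real.cos (ξ / 2) ^ 2 : ℝ) : ℂ)]

/-- The matrix S(ξ) = M(ξ)⁻¹ R^s(ξ). -/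
noncomputable def Ssym (s ξ : ℝ) : Matrix (Fin 2) (Fin 2) ℂ := (Msym ξ)⁻¹ * Rsym s ξ

/-- Λ is an eigenvalue of the 2×2 complex matrix S. -/
def IsEigOf (S : Matrix (Fin 2) (Fin 2) ℂ) (Λ : ℂ) : Prop :=
  ∃ v : Fin 2 → ℂ, v ≠ 0 ∧ S.mulVec v = Λ • v

/-- The coefficient B(ξ) of the characteristic quadratic Λ²/12 − B Λ + C = 0. -/
noncomputable def Bcoef (s ξ : ℝ) : ℝ :=
  4 * Real.sin (ξ / 2) ^ 2 * (2 - Real.cos ξ) / 12 +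
    (s - Real.cos (ξ / 2) ^ 2) * (2 + Real.cos ξ) / 3

/-- The coefficient C(ξ) of the characteristic quadratic Λ²/12 − B Λ + C = 0. -/
noncomputable def Ccoef (s ξ : ℝ) : ℝ :=
  4 * Real.sin (ξ / 2) ^ 2 * (s - Real.cos (ξ / 2) ^ 2)

lemma isEigOf_iff_det_sub_smul_one_eq_zero (S : Matrix (Fin 2) (Fin 2) ℂ) (Λ : ℂ) :
    IsEigOf S Λ ↔ (S - Λ • 1).det = 0 := by
  rw [← Matrix.exists_mulVec_eq_zero_iff]
  simp only [IsEigOf, Matrix.sub_mulVec, Matrix.smul_mulVec, Matrix.one_mulVec, sub_eq_zero]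

lemma isEigOf_inv_mul_iff {M R : Matrix (Fin 2) (Fin 2) ℂ} (hM : M.det ≠ 0) (Λ : ℂ) :
    IsEigOf (M⁻¹ * R) Λ ↔ (R - Λ • M).det = 0 := by
  have hMinv : M⁻¹.det ≠ 0 := (Matrix.isUnit_nonsing_inv_det M (isUnit_iff_ne_zero.2 hM)).ne_zero
  rw [isEigOf_iff_det_sub_smul_one_eq_zero, ← Matrix.nonsing_inv_mul M (isUnit_iff_ne_zero.2 hM),
    ← Matrix.mul_smul, ← Matrix.mul_sub, Matrix.det_mul, mul_eq_zero, or_iff_right hMinv]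

lemma eq_sub_sqrt_of_sq_sub_two_mul_add_eq_zero {b c x : ℝ} (hx : x ^ 2 - 2 * b * x + c = 0)
    (hxb : x ≤ b) : x = b - √(b ^ 2 - c) := by
  rw [show b ^ 2 - c = (b - x) ^ 2 by linear_combination -hx, Real.sqrt_sq (sub_nonneg.2 hxb)]
  ring

lemma Real.sin_eq_mul_sinc (x : ℝ) : sin x = x * sinc x := by
  rcases eq_or_ne x 0 with rfl | hx
  · simp
  · rw [sinc_of_ne_zero hx, mul_div_cancel₀ _ hx]

lemma tendsto_of_mul_eq {α : Type*} {l : Filter α} {x d n : α → ℝ} {D N : ℝ}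
    (hd : Tendsto d l (𝓝 D)) (hD : D ≠ 0) (hn : Tendsto n l (𝓝 N))
    (hxdn : ∀ᶠ a in l, x a * d a = n a) : Tendsto x l (𝓝 (N / D)) := by
  refine (hn.div hd hD).congr' ?_
  filter_upwards [hxdn, hd.eventually_ne hD] with a ha hda
  rw [Pi.div_apply, ← ha, mul_div_cancel_right₀ _ hda]

lemma Msym_det (η : ℝ) : (Msym η).det = 12⁻¹ := by
  have h := congrArg ((↑) : ℝ → ℂ) (Real.sin_sq_add_cos_sq η)
  push_cast at h
  rw [Msym, Matrix.det_fin_two_of]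
  push_cast
  linear_combination (-1 / 36 : ℂ) * h + (Complex.sin η ^ 2 / 36) * Complex.I_sq

lemma det_Rsym_sub_smul_Msym (s η : ℝ) (Λ : ℂ) :
    (Rsym s η - Λ • Msym η).det = Λ ^ 2 / 12 - Bcoef s η * Λ + Ccoef s η := by
  have h := congrArg ((↑) : ℝ → ℂ) (Real.sin_sq_add_cos_sq η)
  push_cast at h
  rw [Matrix.det_fin_two]
  simp only [Rsym, ofReal_mul, ofReal_ofNat, ofReal_pow, ofReal_sin, ofReal_div, ofReal_sub,
    ofReal_cos, Msym, ofReal_add, neg_mul, smul_of, smul_cons, smul_eq_mul, smul_empty, Fin.isValue,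
    Matrix.sub_apply, of_apply, cons_val', cons_val_zero, cons_val_fin_one, cons_val_one, zero_sub,
    mul_neg, neg_neg, Bcoef, Ccoef]
  linear_combination (-Λ ^ 2 / 36 : ℂ) * h + (Λ ^ 2 * Complex.sin η ^ 2 / 36) * Complex.I_sq

lemma isEigOf_Ssym_iff (s η μ : ℝ) :
    IsEigOf (Ssym s η) μ ↔ μ ^ 2 - 12 * Bcoef s η * μ + 12 * Ccoef s η = 0 := by
  have h12 : ((μ ^ 2 - 12 * Bcoef s η * μ + 12 * Ccoef s η : ℝ) : ℂ)
      = 12 * ((μ : ℂ) ^ 2 / 12 - Bcoef s η * μ + Ccoef s η) := by push_cast; ring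
  rw [Ssym, isEigOf_inv_mul_iff (by rw [Msym_det]; norm_num), det_Rsym_sub_smul_Msym,
    ← Complex.ofReal_eq_zero, h12, mul_eq_zero, or_iff_right (by norm_num)]

lemma Ccoef_eq_sq_mul_sinc (s η : ℝ) :
    Ccoef s η = η ^ 2 * (sinc (η / 2) ^ 2 * (s - Real.cos (η / 2) ^ 2)) := by
  rw [Ccoef, Real.sin_eq_mul_sinc]
  ring

lemma continuous_Bcoef (s : ℝ) : Continuous (Bcoef s) := by
  unfold Bcoef
  fun_prop

lemma Bcoef_zero (s : ℝ) : Bcoef s 0 = s - 1 := by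
  norm_num [Bcoef]

noncomputable def physicalEig (s η : ℝ) : ℝ :=
  6 * Bcoef s η - √((6 * Bcoef s η) ^ 2 - 12 * Ccoef s η)

lemma eq_physicalEig_of_isLeast {s η Λ : ℝ}
    (h : IsLeast {μ : ℝ | IsEigOf (Ssym s η) μ} Λ) : Λ = physicalEig s η := by
  have hroot := (isEigOf_Ssym_iff s η Λ).1 h.1
  have hother : 12 * Bcoef s η - Λ ∈ {μ : ℝ | IsEigOf (Ssym s η) μ} :=
    (isEigOf_Ssym_iff s η _).2 (by linear_combination hroot)
  exact eq_sub_sqrt_of_sq_sub_two_mul_add_eq_zero (by linear_combination hroot)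
    (by linarith [h.2 hother])

lemma continuous_physicalEig (s : ℝ) : Continuous (physicalEig s) := by
  unfold physicalEig Ccoef
  have := continuous_Bcoef s
  fun_prop

lemma physicalEig_zero {s : ℝ} (hs : 1 ≤ s) : physicalEig s 0 = 0 := by
  rw [physicalEig, Bcoef_zero, Ccoef_eq_sq_mul_sinc, zero_pow two_ne_zero, zero_mul, mul_zero,
    sub_zero, Real.sqrt_sq (by linarith), sub_self]

theorem Ssym_physical_rescaled_tendsto_sq_general (s ξ : ℝ) (hs : 1 < s)
    (Λph : ℝ → ℝ)
    (hph : ∀ h : ℝ, 0 < h → IsEigOf (Ssym s (ξ * h)) ((Λph h : ℝ) : ℂ) ∧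
      ∀ μ : ℝ, IsEigOf (Ssym s (ξ * h)) (μ : ℂ) → Λph h ≤ μ) :
    Filter.Tendsto (fun h : ℝ => Λph h / h ^ 2) (nhdsWithin 0 (Set.Ioi 0))
      (nhds (ξ ^ 2)) := by
  have hscale : Tendsto (ξ * ·) (𝓝[>] 0) (𝓝 0) :=
    ((continuous_const_mul ξ).tendsto' 0 0 (mul_zero ξ)).mono_left nhdsWithin_le_nhds
  have hΛ : Tendsto Λph (𝓝[>] 0) (𝓝 0) := by
    refine (((continuous_physicalEig s).tendsto' 0 0 (physicalEig_zero hs.le)).comp hscale).congr' ?_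
    filter_upwards [self_mem_nhdsWithin] with h hh
    exact (eq_physicalEig_of_isLeast (hph h hh)).symm
  have hden : Tendsto (fun h => 12 * Bcoef s (ξ * h) - Λph h) (𝓝[>] 0) (𝓝 (12 * (s - 1) - 0)) :=
    ((((continuous_Bcoef s).tendsto' 0 _ (Bcoef_zero s)).comp hscale).const_mul 12).sub hΛ
  have hnum : Tendsto (fun h => 12 * ξ ^ 2 * (sinc (ξ * h / 2) ^ 2 * (s - Real.cos (ξ * h / 2) ^ 2)))
      (𝓝[>] 0) (𝓝 (12 * ξ ^ 2 * (s - 1))) := by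
    refine (Continuous.tendsto' (by fun_prop) 0 _ ?_).mono_left nhdsWithin_le_nhds
    simp
  have hlim := tendsto_of_mul_eq (x := fun h => Λph h / h ^ 2) hden (by linarith) hnum ?_
  · convert hlim using 2
    field_simp [sub_ne_zero.2 hs.ne']
    ring
  filter_upwards [self_mem_nhdsWithin] with h (hh : 0 < h)
  have hroot := (isEigOf_Ssym_iff s _ _).1 (hph h hh).1
  rw [Ccoef_eq_sq_mul_sinc] at hroot
  rw [div_mul_eq_mul_div, div_eq_iff (by positivity)]
  linear_combination -hroot

theorem Ssym_physical_rescaled_tendsto_sq (s ξ : ℝ) (hs : 1 < s) (hξ : ξ ≠ 0)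
    (Λph : ℝ → ℝ)
    (hph : ∀ h : ℝ, 0 < h → IsEigOf (Ssym s (ξ * h)) ((Λph h : ℝ) : ℂ) ∧
      ∀ μ : ℝ, IsEigOf (Ssym s (ξ * h)) (μ : ℂ) → Λph h ≤ μ) :
    Filter.Tendsto (fun h : ℝ => Λph h / h ^ 2) (nhdsWithin 0 (Set.Ioi 0))
      (nhds (ξ ^ 2)) :=
  Ssym_physical_rescaled_tendsto_sq_general s ξ hs Λph hph
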